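/- If the true causal DAG G satisfies the Causal Markov and Triangle-Faithfulness assumptions with respect to a perfect oracle, X and Y are adjacent in G, Y and Z are adjacent in G, and X and Z are not independent conditional on any subset of V \ {X, Z} that contains Y, then in G either X and Z are adjacent as part of a triangle with noncollider Y, or (X, Y, Z) forms a collider (edges into Y). -/

import Mathlib

/-!
Suppose `y` is a noncollider and `x`, `z` are not adjacent. By acyclicity one of them, say
`x`, is not a descendant of the other, and then the noncollider `x - y - z` must point into
`x`, i.e. `y` is a parent of `x`. The local Markov property, which follows from the
d-separation form of the Markov condition because a path leaving `x` forwards can only stay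
active by continuing forwards, makes `x` and `z` independent given the parents of `x`, a set
containing `y`: this contradicts the assumed dependence.
-/

/-- A directed acyclic graph on vertex set `V`. -/
structure DAG (V : Type*) where
  Edge : V → V → Prop
  acyclic : ∀ x, ¬ Relation.TransGen Edge x x

namespace DAG

variable {V : Type*} (G : DAG V)

/-- `x` and `y` are adjacent: there is an edge between them in either direction. -/
def Adj (x y : V) : Prop := G.Edge x y ∨ G.Edge y x

/-- `y` is a descendant of `x` (`x` is an ancestor of `y`); reflexive. -/
def Desc (x y : V) : Prop := Relation.ReflTransGen G.Edge x y

/-- The parents of `v`. -/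
def Parents (v : V) : Set V := {u | G.Edge u v}

/-- The vertices that are neither parents nor descendants of `v`. -/
def NonDescNonPar (v : V) : Set V := {u | ¬ G.Desc v u ∧ ¬ G.Edge u v}

/-- `b` is a collider on the path `p`: `p` contains a consecutive subsequence
`a, b, c` with both edges pointing into `b`. -/
def ColliderOn (p : List V) (b : V) : Prop :=
  ∃ a c, [a, b, c] <:+: p ∧ G.Edge a b ∧ G.Edge c b

/-- `b` is active on the path `p` between `x` and `y` conditional on `Z`:
it is an endpoint, or a noncollider not in `Z`, or a collider that is in `Z`
or has a descendant in `Z`. -/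
def ActiveOn (p : List V) (x y : V) (Z : Set V) (b : V) : Prop :=
  b = x ∨ b = y ∨
    (¬ G.ColliderOn p b ∧ b ∉ Z) ∨
    (G.ColliderOn p b ∧ ∃ d ∈ Z, G.Desc b d)

/-- `p` is an acyclic path between `x` and `y`, every vertex of which is
active conditional on `Z`. -/
def ActivePath (p : List V) (x y : V) (Z : Set V) : Prop :=
  p.Nodup ∧ 2 ≤ p.length ∧ p.Chain' G.Adj ∧
    p.head? = some x ∧ p.getLast? = some y ∧
    ∀ b ∈ p, G.ActiveOn p x y Z b

/-- `x` is d-separated from `y` conditional on `Z`: there is no active acyclic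
path between `x` and `y` conditional on `Z`. -/
def DSep (x y : V) (Z : Set V) : Prop := ¬ ∃ p : List V, G.ActivePath p x y Z

/-- `(x, y, z)` is an unshielded collider. -/
def UnshieldedCollider (x y z : V) : Prop :=
  G.Edge x y ∧ G.Edge z y ∧ ¬ G.Adj x z

/-- `(x, y, z)` is an unshielded noncollider. -/
def UnshieldedNoncollider (x y z : V) : Prop :=
  G.Adj x y ∧ G.Adj y z ∧ ¬ G.Adj x z ∧ ¬ (G.Edge x y ∧ G.Edge z y)

end DAG

/-- The Triangle-Faithfulness assumption (pairwise oracle form). -/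
def TriangleFaithful {V : Type*} (G : DAG V) (CI : V → V → Set V → Prop) : Prop :=
  ∀ x y z : V, G.Adj x y → G.Adj y z → G.Adj x z →
    ((¬ (G.Edge x y ∧ G.Edge z y) →
        ∀ S : Set V, x ∉ S → z ∉ S → y ∉ S → ¬ CI x z S) ∧
     ((G.Edge x y ∧ G.Edge z y) →
        ∀ S : Set V, x ∉ S → z ∉ S → y ∈ S → ¬ CI x z S))

theorem List.Nodup.eq_of_infix_cons_cons {α : Type*} {w b a c : α} {r : List α}
    (hnd : (w :: b :: r).Nodup) (h : [a, b, c] <:+: w :: b :: r) : a = w := by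
  have hbr : b ∉ r := (List.nodup_cons.mp (List.nodup_cons.mp hnd).2).1
  rcases List.infix_cons_iff.mp h with h | h
  · exact (List.cons_prefix_cons.mp h).1
  rcases List.infix_cons_iff.mp h with h | h
  · obtain ⟨-, h⟩ := List.cons_prefix_cons.mp h
    exact absurd (h.subset (by simp)) hbr
  · exact absurd (h.subset (by simp)) hbr

namespace DAG

variable {V : Type*} {G : DAG V}

theorem not_edge_self (a : V) : ¬ G.Edge a a :=
  fun h => G.acyclic a (.single h)

theorem desc_antisymm {a b : V} (hab : G.Desc a b) (hba : G.Desc b a) : a = b := by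
  rcases Relation.reflTransGen_iff_eq_or_transGen.mp hab with h | h
  · exact h.symm
  · exact absurd (h.trans_left hba) (G.acyclic a)

theorem edge_of_noncollider {x y z : V} (hxy : G.Adj x y) (hyz : G.Adj y z)
    (hcol : ¬ (G.Edge x y ∧ G.Edge z y)) (hzx : ¬ G.Desc z x) : G.Edge y z := by
  rcases hyz with hyz | hzy
  · exact hyz
  rcases hxy with hxy | hyx
  · exact absurd ⟨hxy, hzy⟩ hcol
  · exact absurd ((Relation.ReflTransGen.single hzy).tail hyx) hzx

theorem ColliderOn.reverse {p : List V} {b : V} (h : G.ColliderOn p b) :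
    G.ColliderOn p.reverse b := by
  obtain ⟨a, c, hinf, hab, hcb⟩ := h
  exact ⟨c, a, List.reverse_infix.mpr hinf, hcb, hab⟩

theorem colliderOn_reverse_iff {p : List V} {b : V} :
    G.ColliderOn p.reverse b ↔ G.ColliderOn p b :=
  ⟨fun h => by simpa using h.reverse, ColliderOn.reverse⟩

theorem ActivePath.reverse {p : List V} {x y : V} {Z : Set V} (h : G.ActivePath p x y Z) :
    G.ActivePath p.reverse y x Z := by
  obtain ⟨hnd, hlen, hch, hh, hl, hact⟩ := h
  refine ⟨List.nodup_reverse.mpr hnd, by simpa using hlen,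
    List.isChain_reverse.mpr (hch.imp fun _ _ h => h.symm), by simpa using hl,
    by simpa using hh, fun b hb => ?_⟩
  simp only [ActiveOn, colliderOn_reverse_iff]
  rcases hact b (List.mem_reverse.mp hb) with h | h | h | h <;> tauto

theorem DSep.symm {x y : V} {Z : Set V} (h : G.DSep x y Z) : G.DSep y x Z :=
  fun ⟨p, hp⟩ => h ⟨p.reverse, hp.reverse⟩

/-- Once an active path enters the strict descendants of its source along a forward edge,
it cannot turn back: the turning vertex would be a collider with no descendant in `Z`. -/
theorem ActivePath.desc_of_edge_suffix {p : List V} {x y : V} {Z : Set V}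
    (hp : G.ActivePath p x y Z) (hZ : ∀ d ∈ Z, ¬ G.Desc x d) :
    ∀ (l : List V) (a b : V), a :: b :: l <:+ p → G.Edge a b →
      Relation.TransGen G.Edge x b → G.Desc x y := by
  obtain ⟨-, -, hch, -, hl, hact⟩ := hp
  intro l
  induction l with
  | nil =>
    rintro a b ⟨s, rfl⟩ - hxb
    simp only [List.getLast?_append, List.getLast?_cons_cons, List.getLast?_singleton,
      Option.some_or, Option.some.injEq] at hl
    exact hl ▸ hxb.to_reflTransGen
  | cons c l ih =>
    intro a b hsuf hab hxb
    have hinf : [a, b, c] <:+: p := List.IsInfix.trans ⟨[], l, rfl⟩ hsuf.isInfix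
    have hbc : G.Adj b c :=
      (List.isChain_cons_cons.mp (List.isChain_cons_cons.mp (hch.infix hinf)).2).1
    rcases hact b (hinf.subset (by simp)) with rfl | rfl | ⟨hnc, -⟩ | ⟨-, d, hdZ, hbd⟩
    · exact absurd hxb (G.acyclic _)
    · exact hxb.to_reflTransGen
    · rcases hbc with hbc | hcb
      · exact ih b c (List.IsSuffix.trans (List.suffix_cons a _) hsuf) hbc (hxb.tail hbc)
      · exact absurd ⟨a, c, hinf, hab, hcb⟩ hnc
    · exact absurd (hxb.to_reflTransGen.trans hbd) (hZ d hdZ)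

/-- The local Markov property. -/
theorem dsep_parents_of_mem_nonDescNonPar {w u : V} (hu : u ∈ G.NonDescNonPar w) :
    G.DSep w u (G.Parents w) := by
  obtain ⟨hwu, huw⟩ := hu
  rintro ⟨p, hp⟩
  have ⟨hnd, hlen, hch, hh, _, hact⟩ := hp
  obtain ⟨b, r, rfl⟩ : ∃ b r, p = w :: b :: r := by
    match p, hlen, hh with
    | _ :: b :: r, _, hh => exact ⟨b, r, by simpa using hh⟩
  have hZ : ∀ d ∈ G.Parents w, ¬ G.Desc w d := fun d hdw hwd => G.acyclic w (.tail' hwd hdw)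
  rcases (List.isChain_cons_cons.mp hch).1 with hwb | hbw
  · exact hwu (hp.desc_of_edge_suffix hZ r w b List.suffix_rfl hwb (.single hwb))
  rcases hact b (by simp) with rfl | rfl | ⟨-, hbZ⟩ | ⟨⟨a, c, hinf, haw, -⟩, -⟩
  · exact G.not_edge_self _ hbw
  · exact huw hbw
  · exact hbZ hbw
  · obtain rfl := hnd.eq_of_infix_cons_cons hinf
    exact G.acyclic a ((Relation.TransGen.single haw).tail hbw)

end DAG

theorem collider_orientation_sound_general
    {V : Type*} (G : DAG V)
    (CI : V → V → Set V → Prop)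
    (hMarkov : ∀ (x y : V) (Z : Set V), G.DSep x y Z → CI x y Z)
    (x y z : V) (hxy : G.Adj x y) (hyz : G.Adj y z) (hxz : x ≠ z)
    (hdep : ∀ S : Set V, x ∉ S → z ∉ S → y ∈ S → ¬ CI x z S) :
    (G.Adj x z ∧ ¬ (G.Edge x y ∧ G.Edge z y)) ∨ (G.Edge x y ∧ G.Edge z y) := by
  by_cases hcol : G.Edge x y ∧ G.Edge z y
  · exact Or.inr hcol
  by_cases hadj : G.Adj x z
  · exact Or.inl ⟨hadj, hcol⟩
  exfalso
  have hnxz : ¬ G.Edge x z := fun h => hadj (Or.inl h)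
  have hnzx : ¬ G.Edge z x := fun h => hadj (Or.inr h)
  by_cases hdesc : G.Desc x z
  · have hzx : ¬ G.Desc z x := fun h => hxz (DAG.desc_antisymm hdesc h)
    have hyz' : G.Edge y z := DAG.edge_of_noncollider hxy hyz hcol hzx
    have hsep : G.DSep x z (G.Parents z) :=
      (DAG.dsep_parents_of_mem_nonDescNonPar ⟨hzx, hnxz⟩).symm
    exact hdep (G.Parents z) hnxz (DAG.not_edge_self z) hyz' (hMarkov x z _ hsep)
  · have hyx : G.Edge y x :=
      DAG.edge_of_noncollider hyz.symm hxy.symm (fun h => hcol h.symm) hdesc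
    have hsep : G.DSep x z (G.Parents x) :=
      DAG.dsep_parents_of_mem_nonDescNonPar ⟨hdesc, hnzx⟩
    exact hdep (G.Parents x) (DAG.not_edge_self x) hnzx hyx (hMarkov x z _ hsep)

/-- If the true causal DAG `G` satisfies the Causal Markov and
Triangle-Faithfulness assumptions with respect to a perfect oracle, `x` is adjacent to
`y`, `y` is adjacent to `z`, and `x` and `z` are not independent conditional on any
subset of the remaining variables that contains `y`, then either `x` and `z` are
adjacent as part of a triangle with noncollider `y`, or `(x, y, z)` is a collider. -/
theorem collider_orientation_sound
    {V : Type*} [Fintype V] [DecidableEq V] (G : DAG V)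
    (CI : V → V → Set V → Prop)
    (hMarkov : ∀ (x y : V) (Z : Set V), G.DSep x y Z → CI x y Z)
    (hTF : TriangleFaithful G CI)
    (x y z : V) (hxy : G.Adj x y) (hyz : G.Adj y z) (hxz : x ≠ z)
    (hdep : ∀ S : Set V, x ∉ S → z ∉ S → y ∈ S → ¬ CI x z S) :
    (G.Adj x z ∧ ¬ (G.Edge x y ∧ G.Edge z y)) ∨ (G.Edge x y ∧ G.Edge z y) :=
  collider_orientation_sound_general G CI hMarkov x y z hxy hyz hxz hdep
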